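/- There exists an absolute constant C > 0 with the following property: for all real numbers a < b and δ > 0, every real-valued smooth function g on [a,b] with |g''(x)| ≥ δ for all x ∈ [a,b], and every complex-valued smooth function ψ on [a,b], one has |∫_a^b e^{i g(x)} ψ(x) dx| ≤ C δ^{−1/2} ( sup_{x∈[a,b]} |ψ(x)| + ∫_a^b |ψ'(x)| dx ). -/

import Mathlib

open MeasureTheory

open Set intervalIntegral
open scoped Interval


private lemma norm_exp_I_mul_real (r : ℝ) : ‖Complex.exp (Complex.I * (r : ℂ))‖ = 1 := by
  rw [Complex.norm_exp]
  simp

private lemma vdc_piece (c d lam : ℝ) (hcd : c ≤ d) (hlam : 0 < lam) (g G G2 : ℝ → ℝ)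
    (hgc : ContinuousOn g (Icc c d)) (hGc : ContinuousOn G (Icc c d))
    (hG2c : ContinuousOn G2 (Icc c d))
    (hg' : ∀ x ∈ Ioo c d, HasDerivAt g (G x) x)
    (hG' : ∀ x ∈ Ioo c d, HasDerivAt G (G2 x) x)
    (hG2pos : ∀ x ∈ Icc c d, 0 ≤ G2 x)
    (hsign : (∀ x ∈ Icc c d, lam ≤ G x) ∨ (∀ x ∈ Icc c d, G x ≤ -lam)) :
    ‖∫ x in c..d, Complex.exp (Complex.I * (g x : ℂ))‖ ≤ 3 / lam := by
  have hne : ∀ x ∈ Icc c d, G x ≠ 0 := by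
    intro x hx
    rcases hsign with h | h
    · exact ne_of_gt (lt_of_lt_of_le hlam (h x hx))
    · exact ne_of_lt (lt_of_le_of_lt (h x hx) (by linarith))
  have habs : ∀ x ∈ Icc c d, lam ≤ |G x| := by
    intro x hx
    rcases hsign with h | h
    · exact le_trans (h x hx) (le_abs_self _)
    · rw [abs_of_nonpos (by linarith [h x hx])]; linarith [h x hx]
  have hzne : ∀ x ∈ Icc c d, (Complex.I * (G x : ℂ)) ≠ 0 := by
    intro x hx
    exact mul_ne_zero Complex.I_ne_zero (by exact_mod_cast hne x hx)
  set e : ℝ → ℂ := fun x => Complex.exp (Complex.I * (g x : ℂ)) with he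
  set u : ℝ → ℂ := fun x => 1 / (Complex.I * (G x : ℂ)) with hu
  set u' : ℝ → ℂ := fun x => -(Complex.I * (G2 x : ℂ)) / (Complex.I * (G x : ℂ)) ^ 2 with hu'
  set v' : ℝ → ℂ := fun x => e x * (Complex.I * (G x : ℂ)) with hv'
  -- continuity facts
  have hGcC : ContinuousOn (fun x => (Complex.I * (G x : ℂ))) (Icc c d) :=
    continuousOn_const.mul (Complex.continuous_ofReal.comp_continuousOn hGc)
  have hec : ContinuousOn e (Icc c d) :=
    Complex.continuous_exp.comp_continuousOn
      (continuousOn_const.mul (Complex.continuous_ofReal.comp_continuousOn hgc))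
  have huc : ContinuousOn u (Icc c d) := ContinuousOn.div continuousOn_const hGcC hzne
  have hu'c : ContinuousOn u' (Icc c d) := by
    apply ContinuousOn.div
    · exact (continuousOn_const.mul (Complex.continuous_ofReal.comp_continuousOn hG2c)).neg
    · exact hGcC.pow 2
    · intro x hx; exact pow_ne_zero 2 (hzne x hx)
  have hv'c : ContinuousOn v' (Icc c d) := hec.mul hGcC
  -- derivatives
  have hud : ∀ x ∈ Ioo c d, HasDerivAt u (u' x) x := by
    intro x hx
    have h1 : HasDerivAt (fun y => (Complex.I * (G y : ℂ))) (Complex.I * (G2 x : ℂ)) x :=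
      ((hG' x hx).ofReal_comp).const_mul Complex.I
    have h0 : (Complex.I * (G x : ℂ)) ≠ 0 := hzne x (Ioo_subset_Icc_self hx)
    rw [hu, hu']
    exact ((hasDerivAt_const x (1 : ℂ)).div h1 h0).congr_deriv (by ring)
  have hvd : ∀ x ∈ Ioo c d, HasDerivAt e (v' x) x := by
    intro x hx
    have h1 : HasDerivAt (fun y => (Complex.I * (g y : ℂ))) (Complex.I * (G x : ℂ)) x :=
      ((hg' x hx).ofReal_comp).const_mul Complex.I
    simpa [he, hv'] using h1.cexp
  have hIoo : Ioo (min c d) (max c d) = Ioo c d := by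
    rw [min_eq_left hcd, max_eq_right hcd]
  have hIcc : [[c, d]] = Icc c d := uIcc_of_le hcd
  -- integration by parts
  have ibp : ∫ x in c..d, u x * v' x
      = u d * e d - u c * e c - ∫ x in c..d, u' x * e x := by
    apply integral_mul_deriv_eq_deriv_mul_of_hasDeriv_right
    · rw [hIcc]; exact huc
    · rw [hIcc]; exact hec
    · rw [hIoo]; intro x hx; exact (hud x hx).hasDerivWithinAt
    · rw [hIoo]; intro x hx; exact (hvd x hx).hasDerivWithinAt
    · exact (hu'c.mono (by rw [hIcc])).intervalIntegrable
    · exact (hv'c.mono (by rw [hIcc])).intervalIntegrable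
  have lhs_eq : ∫ x in c..d, u x * v' x = ∫ x in c..d, e x := by
    apply integral_congr
    intro x hx
    rw [hIcc] at hx
    have h0 := hzne x hx
    simp only [hu, hv']
    field_simp
    exact mul_div_cancel_left₀ _ (by exact_mod_cast hne x hx)
  -- FTC for the weight
  have key : ∫ x in c..d, G2 x / G x ^ 2 = -(G d)⁻¹ - -(G c)⁻¹ := by
    apply integral_eq_sub_of_hasDeriv_right_of_le hcd
    · exact (hGc.inv₀ hne).neg
    · intro x hx
      have h1 := ((hG' x hx).inv (hne x (Ioo_subset_Icc_self hx))).neg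
      have : -(-G2 x / G x ^ 2) = G2 x / G x ^ 2 := by ring
      rw [← this]
      exact h1.hasDerivWithinAt
    · refine ((hG2c.div (hGc.pow 2) ?_).mono (by rw [hIcc])).intervalIntegrable
      intro x hx; exact pow_ne_zero 2 (hne x hx)
  have hnorm_eq : ∀ x ∈ Icc c d, ‖u' x * e x‖ = G2 x / G x ^ 2 := by
    intro x hx
    rw [norm_mul, norm_exp_I_mul_real, mul_one]
    simp only [hu', norm_div, norm_neg, norm_mul, norm_pow, Complex.norm_I, one_mul,
      Complex.norm_real, Real.norm_eq_abs]
    rw [abs_of_nonneg (hG2pos x hx), sq_abs]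
  have hkey_le : -(G d)⁻¹ - -(G c)⁻¹ ≤ 1 / lam := by
    have hc : c ∈ Icc c d := left_mem_Icc.mpr hcd
    have hd : d ∈ Icc c d := right_mem_Icc.mpr hcd
    rcases hsign with h | h
    · have h1 := h c hc
      have h2 := h d hd
      have hcpos : 0 < G c := lt_of_lt_of_le hlam h1
      have hdpos : 0 < G d := lt_of_lt_of_le hlam h2
      have e1 : (G c)⁻¹ ≤ 1 / lam := by
        rw [inv_eq_one_div]; exact one_div_le_one_div_of_le hlam h1
      have e2 : 0 < (G d)⁻¹ := inv_pos.mpr hdpos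
      linarith
    · have h1 := h c hc
      have h2 := h d hd
      have hcneg : G c < 0 := lt_of_le_of_lt h1 (by linarith)
      have hdneg : G d < 0 := lt_of_le_of_lt h2 (by linarith)
      have e1 : (G c)⁻¹ < 0 := inv_lt_zero.mpr hcneg
      have e2 : (-(G d))⁻¹ ≤ 1 / lam := by
        rw [inv_eq_one_div]; exact one_div_le_one_div_of_le hlam (by linarith)
      rw [inv_neg] at e2
      linarith
  have hint_norm : ‖∫ x in c..d, u' x * e x‖ ≤ 1 / lam := by
    calc ‖∫ x in c..d, u' x * e x‖ ≤ ∫ x in c..d, ‖u' x * e x‖ :=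
          norm_integral_le_integral_norm hcd
      _ = ∫ x in c..d, G2 x / G x ^ 2 := by
          apply integral_congr
          intro x hx; rw [hIcc] at hx; exact hnorm_eq x hx
      _ = -(G d)⁻¹ - -(G c)⁻¹ := key
      _ ≤ 1 / lam := hkey_le
  have hub : ∀ x ∈ Icc c d, ‖u x‖ ≤ 1 / lam := by
    intro x hx
    simp only [hu, norm_div, norm_one, norm_mul, Complex.norm_I, one_mul, Complex.norm_real,
      Real.norm_eq_abs]
    exact one_div_le_one_div_of_le hlam (habs x hx)
  have hc : c ∈ Icc c d := left_mem_Icc.mpr hcd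
  have hd : d ∈ Icc c d := right_mem_Icc.mpr hcd
  calc ‖∫ x in c..d, e x‖ = ‖u d * e d - u c * e c - ∫ x in c..d, u' x * e x‖ := by
        rw [← lhs_eq, ibp]
    _ ≤ ‖u d * e d‖ + ‖u c * e c‖ + ‖∫ x in c..d, u' x * e x‖ := by
        refine le_trans (norm_sub_le _ _) ?_
        gcongr
        exact norm_sub_le _ _
    _ ≤ 1 / lam + 1 / lam + 1 / lam := by
        gcongr
        · rw [norm_mul, norm_exp_I_mul_real, mul_one]; exact hub d hd
        · rw [norm_mul, norm_exp_I_mul_real, mul_one]; exact hub c hc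
    _ = 3 / lam := by ring

private lemma vdc_noamp_pos (a b δ : ℝ) (hab : a ≤ b) (hδ : 0 < δ) (g G G2 : ℝ → ℝ)
    (hgc : ContinuousOn g (Icc a b)) (hGc : ContinuousOn G (Icc a b))
    (hG2c : ContinuousOn G2 (Icc a b))
    (hg' : ∀ x ∈ Ioo a b, HasDerivAt g (G x) x)
    (hG' : ∀ x ∈ Ioo a b, HasDerivAt G (G2 x) x)
    (hδG2 : ∀ x ∈ Icc a b, δ ≤ G2 x) :
    ‖∫ x in a..b, Complex.exp (Complex.I * (g x : ℂ))‖ ≤ 8 * δ ^ (-(1/2) : ℝ) := by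
  set lam := Real.sqrt δ with hlamdef
  have hlam : 0 < lam := Real.sqrt_pos.mpr hδ
  set e : ℝ → ℂ := fun x => Complex.exp (Complex.I * (g x : ℂ)) with he
  have hec : ContinuousOn e (Icc a b) :=
    Complex.continuous_exp.comp_continuousOn
      (continuousOn_const.mul (Complex.continuous_ofReal.comp_continuousOn hgc))
  -- monotonicity of G
  have hmono : MonotoneOn G (Icc a b) := by
    apply monotoneOn_of_deriv_nonneg (convex_Icc a b) hGc
    · intro x hx
      rw [interior_Icc] at hx
      exact ((hG' x hx).differentiableAt).differentiableWithinAt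
    · intro x hx
      rw [interior_Icc] at hx
      rw [(hG' x hx).deriv]
      linarith [hδG2 x (Ioo_subset_Icc_self hx)]
  -- growth estimate
  have hgrow : ∀ x ∈ Icc a b, ∀ y ∈ Icc a b, x ≤ y → δ * (y - x) ≤ G y - G x := by
    have hHmono : MonotoneOn (fun t => G t - δ * t) (Icc a b) := by
      apply monotoneOn_of_deriv_nonneg (convex_Icc a b)
        (hGc.sub (Continuous.continuousOn (by fun_prop)))
      · intro x hx
        rw [interior_Icc] at hx
        have h1 : HasDerivAt (fun t => G t - δ * t) (G2 x - δ) x := by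
          exact ((hG' x hx).sub ((hasDerivAt_id x).const_mul δ)).congr_deriv (by ring)
        exact h1.differentiableAt.differentiableWithinAt
      · intro x hx
        rw [interior_Icc] at hx
        have h1 : HasDerivAt (fun t => G t - δ * t) (G2 x - δ) x := by
          exact ((hG' x hx).sub ((hasDerivAt_id x).const_mul δ)).congr_deriv (by ring)
        change 0 ≤ deriv (fun t => G t - δ * t) x
        rw [h1.deriv]
        linarith [hδG2 x (Ioo_subset_Icc_self hx)]
    intro x hx y hy hxy
    have := hHmono hx hy hxy
    simp only at this
    linarith
  -- the two bad sets
  set S := Icc a b ∩ G ⁻¹' (Iic (-lam)) with hSdef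
  set T := Icc a b ∩ G ⁻¹' (Ici lam) with hTdef
  have hScl : IsClosed S := hGc.preimage_isClosed_of_isClosed isClosed_Icc isClosed_Iic
  have hTcl : IsClosed T := hGc.preimage_isClosed_of_isClosed isClosed_Icc isClosed_Ici
  have hSsub : insert a S ⊆ Icc a b := insert_subset ⟨le_refl a, hab⟩ inter_subset_left
  have hTsub : insert b T ⊆ Icc a b := insert_subset ⟨hab, le_refl b⟩ inter_subset_left
  have hScomp : IsCompact (insert a S) :=
    isCompact_Icc.of_isClosed_subset (by rw [Set.insert_eq]; exact isClosed_singleton.union hScl) hSsub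
  have hTcomp : IsCompact (insert b T) :=
    isCompact_Icc.of_isClosed_subset (by rw [Set.insert_eq]; exact isClosed_singleton.union hTcl) hTsub
  set c := sSup (insert a S) with hcdef
  set d := sInf (insert b T) with hddef
  have hcmem : c ∈ insert a S := hScomp.sSup_mem (insert_nonempty _ _)
  have hdmem : d ∈ insert b T := hTcomp.sInf_mem (insert_nonempty _ _)
  have hcIcc : c ∈ Icc a b := hSsub hcmem
  have hdIcc : d ∈ Icc a b := hTsub hdmem
  have hac : a ≤ c := le_csSup hScomp.bddAbove (mem_insert a S)
  have hdb : d ≤ b := csInf_le hTcomp.bddBelow (mem_insert b T)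
  have hcd : c ≤ d := by
    apply csSup_le (insert_nonempty _ _)
    intro x hx
    rcases mem_insert_iff.mp hx with rfl | hxS
    · exact hdIcc.1
    · by_contra hcon
      push_neg at hcon
      rcases mem_insert_iff.mp hdmem with hdb' | hdT
      · exact absurd hxS.1.2 (by rw [hdb'] at hcon; linarith)
      · have h1 : G d ≤ G x := hmono hdIcc hxS.1 (le_of_lt hcon)
        have h2 : G x ≤ -lam := hxS.2
        have h3 : lam ≤ G d := hdT.2
        linarith
  have h1 : ∀ x ∈ Icc a b, c < x → -lam < G x := by
    intro x hx hcx
    by_contra hcon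
    push_neg at hcon
    have : x ∈ insert a S := mem_insert_of_mem _ ⟨hx, hcon⟩
    exact absurd (le_csSup hScomp.bddAbove this) (not_le.mpr hcx)
  have h2 : ∀ x ∈ Icc a b, x < d → G x < lam := by
    intro x hx hxd
    by_contra hcon
    push_neg at hcon
    have : x ∈ insert b T := mem_insert_of_mem _ ⟨hx, hcon⟩
    exact absurd (csInf_le hTcomp.bddBelow this) (not_le.mpr hxd)
  have hwidth : d - c ≤ 2 * lam / δ := by
    by_contra hcon
    push_neg at hcon
    have h2l : 0 ≤ 2 * lam / δ := by positivity
    set ε := (d - c - 2 * lam / δ) / 3 with hεdef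
    have hε : 0 < ε := by rw [hεdef]; linarith
    set x := c + ε with hxdef
    set y := d - ε with hydef
    have hxy : x ≤ y := by rw [hxdef, hydef]; linarith
    have hxIcc : x ∈ Icc a b := ⟨by linarith [hcIcc.1], by linarith [hdIcc.2]⟩
    have hyIcc : y ∈ Icc a b := ⟨by linarith [hcIcc.1], by linarith [hdIcc.2]⟩
    have g1 : -lam < G x := h1 x hxIcc (by rw [hxdef]; linarith)
    have g2 : G y < lam := h2 y hyIcc (by rw [hydef]; linarith)
    have g3 := hgrow x hxIcc y hyIcc hxy
    have hyx : 2 * lam / δ < y - x := by rw [hxdef, hydef]; linarith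
    have h3 : 2 * lam < (y - x) * δ := (div_lt_iff₀ hδ).mp hyx
    nlinarith
  -- integrability of pieces
  have hint : ∀ p q : ℝ, p ≤ q → Icc p q ⊆ Icc a b → IntervalIntegrable e volume p q := by
    intro p q hpq hsub
    exact ((hec.mono hsub).mono (by rw [uIcc_of_le hpq])).intervalIntegrable
  -- piece 1
  have piece1 : ‖∫ x in a..c, e x‖ ≤ 3 / lam := by
    rcases mem_insert_iff.mp hcmem with hca | hcS
    · rw [hca]
      simp only [intervalIntegral.integral_same, norm_zero]
      positivity
    · have hsub : Icc a c ⊆ Icc a b := Icc_subset_Icc le_rfl hcIcc.2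
      apply vdc_piece a c lam hcIcc.1 hlam g G G2 (hgc.mono hsub) (hGc.mono hsub)
        (hG2c.mono hsub)
        (fun x hx => hg' x (Ioo_subset_Ioo le_rfl hcIcc.2 hx))
        (fun x hx => hG' x (Ioo_subset_Ioo le_rfl hcIcc.2 hx))
        (fun x hx => le_trans (le_of_lt hδ) (hδG2 x (hsub hx)))
      right
      intro x hx
      have h5 := hmono (hsub hx) hcIcc hx.2
      have h4 : G c ≤ -lam := by simpa using hcS.2
      linarith
  -- piece 3
  have piece3 : ‖∫ x in d..b, e x‖ ≤ 3 / lam := by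
    rcases mem_insert_iff.mp hdmem with hdb' | hdT
    · rw [hdb']
      simp only [intervalIntegral.integral_same, norm_zero]
      positivity
    · have hsub : Icc d b ⊆ Icc a b := Icc_subset_Icc hdIcc.1 le_rfl
      apply vdc_piece d b lam hdb hlam g G G2 (hgc.mono hsub) (hGc.mono hsub)
        (hG2c.mono hsub)
        (fun x hx => hg' x (Ioo_subset_Ioo hdIcc.1 le_rfl hx))
        (fun x hx => hG' x (Ioo_subset_Ioo hdIcc.1 le_rfl hx))
        (fun x hx => le_trans (le_of_lt hδ) (hδG2 x (hsub hx)))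
      left
      intro x hx
      have h5 := hmono hdIcc (hsub hx) hx.1
      have h4 : lam ≤ G d := by simpa using hdT.2
      linarith
  -- piece 2
  have piece2 : ‖∫ x in c..d, e x‖ ≤ 2 * lam / δ := by
    calc ‖∫ x in c..d, e x‖ ≤ 1 * |d - c| := by
          apply intervalIntegral.norm_integral_le_of_norm_le_const
          intro x hx
          exact le_of_eq (norm_exp_I_mul_real (g x))
      _ = d - c := by rw [one_mul, abs_of_nonneg (by linarith)]
      _ ≤ 2 * lam / δ := hwidth
  -- splitting
  have hsplit : ∫ x in a..b, e x =
      (∫ x in a..c, e x) + (∫ x in c..d, e x) + (∫ x in d..b, e x) := by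
    have i1 := hint a c hac (Icc_subset_Icc le_rfl hcIcc.2)
    have i2 := hint c d hcd (Icc_subset_Icc hcIcc.1 hdIcc.2)
    have i3 := hint d b hdb (Icc_subset_Icc hdIcc.1 le_rfl)
    rw [integral_add_adjacent_intervals i1 i2,
      integral_add_adjacent_intervals (i1.trans i2) i3]
  -- numbers
  have hrpow : δ ^ (-(1/2) : ℝ) = 1 / lam := by
    rw [Real.rpow_neg (le_of_lt hδ), ← Real.sqrt_eq_rpow, ← hlamdef, one_div]

  have hlam2 : lam * lam = δ := Real.mul_self_sqrt (le_of_lt hδ)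
  have hmid : 2 * lam / δ = 2 / lam := by
    rw [← hlam2]; field_simp
  calc ‖∫ x in a..b, e x‖
      ≤ ‖∫ x in a..c, e x‖ + ‖∫ x in c..d, e x‖ + ‖∫ x in d..b, e x‖ := by
        rw [hsplit]; exact le_trans (norm_add_le _ _) (by gcongr; exact norm_add_le _ _)
    _ ≤ 3 / lam + 2 * lam / δ + 3 / lam := by gcongr
    _ = 8 * δ ^ (-(1/2) : ℝ) := by rw [hmid, hrpow]; ring

private lemma interval_integral_conj {f : ℝ → ℂ} {a b : ℝ} :
    (∫ x in a..b, (starRingEnd ℂ) (f x)) = (starRingEnd ℂ) (∫ x in a..b, f x) := by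
  rw [intervalIntegral, intervalIntegral, integral_conj, integral_conj, map_sub]

private lemma vdc_noamp (a b δ : ℝ) (hab : a ≤ b) (hδ : 0 < δ) (g G G2 : ℝ → ℝ)
    (hgc : ContinuousOn g (Icc a b)) (hGc : ContinuousOn G (Icc a b))
    (hG2c : ContinuousOn G2 (Icc a b))
    (hg' : ∀ x ∈ Ioo a b, HasDerivAt g (G x) x)
    (hG' : ∀ x ∈ Ioo a b, HasDerivAt G (G2 x) x)
    (hδG2 : ∀ x ∈ Icc a b, δ ≤ |G2 x|) :
    ‖∫ x in a..b, Complex.exp (Complex.I * (g x : ℂ))‖ ≤ 8 * δ ^ (-(1/2) : ℝ) := by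
  have haIcc : a ∈ Icc a b := left_mem_Icc.mpr hab
  have hdichot : (∀ x ∈ Icc a b, δ ≤ G2 x) ∨ (∀ x ∈ Icc a b, G2 x ≤ -δ) := by
    have hsplit : ∀ x ∈ Icc a b, δ ≤ G2 x ∨ G2 x ≤ -δ := by
      intro x hx
      rcases le_abs.mp (hδG2 x hx) with h | h
      · exact Or.inl h
      · exact Or.inr (by linarith)
    have hivt : ∀ x ∈ Icc a b, ∀ y ∈ Icc a b, δ ≤ G2 x → G2 y ≤ -δ → False := by
      intro x hx y hy hxp hyn
      have hsub : uIcc x y ⊆ Icc a b := uIcc_subset_Icc hx hy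
      have h0 : (0 : ℝ) ∈ uIcc (G2 x) (G2 y) := by
        rw [Set.mem_uIcc]
        right
        constructor <;> linarith
      obtain ⟨z, hz, hz0⟩ := intermediate_value_uIcc (hG2c.mono hsub) h0
      have := hδG2 z (hsub hz)
      rw [hz0] at this
      simp at this
      linarith
    rcases hsplit a haIcc with h | h
    · left
      intro x hx
      rcases hsplit x hx with h' | h'
      · exact h'
      · exact absurd (hivt a haIcc x hx h h') (fun t => t)
    · right
      intro x hx
      rcases hsplit x hx with h' | h'
      · exact absurd (hivt x hx a haIcc h' h) (fun t => t)
      · exact h'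
  rcases hdichot with hpos | hneg
  · exact vdc_noamp_pos a b δ hab hδ g G G2 hgc hGc hG2c hg' hG' hpos
  · have hres := vdc_noamp_pos a b δ hab hδ (fun x => -g x) (fun x => -G x)
      (fun x => -G2 x) hgc.neg hGc.neg hG2c.neg
      (fun x hx => (hg' x hx).neg) (fun x hx => (hG' x hx).neg)
      (fun x hx => by simpa using (by linarith [hneg x hx] : δ ≤ -G2 x))
    have hconj : ∀ x : ℝ, Complex.exp (Complex.I * ((-g x : ℝ) : ℂ))
        = (starRingEnd ℂ) (Complex.exp (Complex.I * (g x : ℂ))) := by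
      intro x
      rw [← Complex.exp_conj]
      congr 1
      rw [map_mul, Complex.conj_I, Complex.conj_ofReal]
      push_cast
      ring
    calc ‖∫ x in a..b, Complex.exp (Complex.I * (g x : ℂ))‖
        = ‖(starRingEnd ℂ) (∫ x in a..b, Complex.exp (Complex.I * (g x : ℂ)))‖ := by
          rw [RCLike.norm_conj]
      _ = ‖∫ x in a..b, Complex.exp (Complex.I * ((-g x : ℝ) : ℂ))‖ := by
          rw [← interval_integral_conj]
          exact congrArg norm (intervalIntegral.integral_congr fun x _ => (hconj x).symm)
      _ ≤ 8 * δ ^ (-(1/2) : ℝ) := hres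
/-- The stationary phase (van der Corput) lemma with an amplitude: if `|g''| ≥ δ` on `[a,b]`,
then `|∫_a^b e^{ig(x)} ψ(x) dx| ≤ C δ^{-1/2} (sup |ψ| + ∫_a^b |ψ'|)`, with `C` independent of
`δ, a, b, g, ψ`. -/
theorem stationary_phase_amplitude :
    ∃ C : ℝ, 0 < C ∧ ∀ (a b δ : ℝ), a < b → 0 < δ →
      ∀ g : ℝ → ℝ, ContDiffOn ℝ (⊤ : ℕ∞) g (Set.Icc a b) →
        (∀ x ∈ Set.Icc a b, δ ≤ |iteratedDerivWithin 2 g (Set.Icc a b) x|) →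
      ∀ ψ : ℝ → ℂ, ContDiffOn ℝ (⊤ : ℕ∞) ψ (Set.Icc a b) →
        ‖∫ x in a..b, Complex.exp (Complex.I * ((g x : ℝ) : ℂ)) * ψ x‖ ≤
          C * δ ^ (-(1 / 2) : ℝ) *
            ((⨆ x ∈ Set.Icc a b, ‖ψ x‖) +
              ∫ x in a..b, ‖derivWithin ψ (Set.Icc a b) x‖) := by
  refine ⟨8, by norm_num, ?_⟩
  intro a b δ hab hδ g hg hg2 ψ hψ
  have hab' : a ≤ b := le_of_lt hab
  have hs : UniqueDiffOn ℝ (Icc a b) := uniqueDiffOn_Icc hab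
  set s := Icc a b with hsdef
  set G := derivWithin g s with hGdef
  set G2 := derivWithin G s with hG2def
  have hGcd : ContDiffOn ℝ (⊤ : ℕ∞) G s := hg.derivWithin hs (by simp)
  have hG2cd : ContDiffOn ℝ (⊤ : ℕ∞) G2 s := hGcd.derivWithin hs (by simp)
  have hGc : ContinuousOn G s := hGcd.continuousOn
  have hG2c : ContinuousOn G2 s := hG2cd.continuousOn
  -- identify iterated deriv
  have hiter : ∀ x ∈ s, iteratedDerivWithin 2 g s x = G2 x := by
    intro x hx
    rw [iteratedDerivWithin_succ]
    apply derivWithin_congr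
    · intro y hy
      exact congrFun iteratedDerivWithin_one y
    · exact congrFun iteratedDerivWithin_one x
  have hδG2 : ∀ x ∈ s, δ ≤ |G2 x| := fun x hx => by
    rw [← hiter x hx]; exact hg2 x hx
  -- derivatives at interior points
  have hg' : ∀ x ∈ Ioo a b, HasDerivAt g (G x) x := by
    intro x hx
    have h1 := (hg.differentiableOn (by simp) x (Ioo_subset_Icc_self hx)).hasDerivWithinAt
    exact h1.hasDerivAt (Icc_mem_nhds hx.1 hx.2)
  have hG' : ∀ x ∈ Ioo a b, HasDerivAt G (G2 x) x := by
    intro x hx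
    have h1 := (hGcd.differentiableOn (by simp) x (Ioo_subset_Icc_self hx)).hasDerivWithinAt
    exact h1.hasDerivAt (Icc_mem_nhds hx.1 hx.2)
  set ψ' := derivWithin ψ s with hψ'def
  have hψ'cd : ContDiffOn ℝ (⊤ : ℕ∞) (derivWithin ψ s) s := hψ.derivWithin hs (by simp)
  have hψ'c : ContinuousOn ψ' s := hψ'cd.continuousOn
  have hψc : ContinuousOn ψ s := hψ.continuousOn
  have hψ' : ∀ x ∈ Ioo a b, HasDerivAt ψ (ψ' x) x := by
    intro x hx
    have h1 := (hψ.differentiableOn (by simp) x (Ioo_subset_Icc_self hx)).hasDerivWithinAt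
    exact h1.hasDerivAt (Icc_mem_nhds hx.1 hx.2)
  set e : ℝ → ℂ := fun x => Complex.exp (Complex.I * (g x : ℂ)) with he
  have hec : ContinuousOn e s :=
    Complex.continuous_exp.comp_continuousOn
      (continuousOn_const.mul (Complex.continuous_ofReal.comp_continuousOn hg.continuousOn))
  have heint : IntervalIntegrable e volume a b :=
    (hec.mono (by rw [uIcc_of_le hab'])).intervalIntegrable
  set F : ℝ → ℂ := fun t => ∫ x in a..t, e x with hFdef
  set M : ℝ := 8 * δ ^ (-(1/2) : ℝ) with hMdef
  have hM0 : 0 ≤ M := by positivity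
  -- bound on F
  have hFb : ∀ t ∈ s, ‖F t‖ ≤ M := by
    intro t ht
    apply vdc_noamp a t δ ht.1 hδ g G G2
      (hg.continuousOn.mono (Icc_subset_Icc le_rfl ht.2))
      (hGc.mono (Icc_subset_Icc le_rfl ht.2))
      (hG2c.mono (Icc_subset_Icc le_rfl ht.2))
      (fun x hx => hg' x (Ioo_subset_Ioo le_rfl ht.2 hx))
      (fun x hx => hG' x (Ioo_subset_Ioo le_rfl ht.2 hx))
      (fun x hx => hδG2 x (Icc_subset_Icc le_rfl ht.2 hx))
  -- continuity of F
  have hFc : ContinuousOn F s := by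
    have := continuousOn_primitive_interval
      (μ := volume) (a := a) (b := b) (f := e) ?_
    · rw [uIcc_of_le hab'] at this; exact this
    · rw [uIcc_of_le hab']
      exact (hec.mono le_rfl).integrableOn_compact isCompact_Icc
  -- derivative of F at interior points
  have hF' : ∀ x ∈ Ioo a b, HasDerivAt F (e x) x := by
    intro x hx
    apply integral_hasDerivAt_right
    · exact (hec.mono (by rw [uIcc_of_le hx.1.le]; exact Icc_subset_Icc le_rfl hx.2.le)).intervalIntegrable
    · exact ⟨s, Icc_mem_nhds hx.1 hx.2, hec.aestronglyMeasurable measurableSet_Icc⟩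
    · exact (hec x (Ioo_subset_Icc_self hx)).continuousAt (Icc_mem_nhds hx.1 hx.2)
  -- integrability
  have hψ'int : IntervalIntegrable ψ' volume a b :=
    (hψ'c.mono (by rw [uIcc_of_le hab'])).intervalIntegrable
  -- integration by parts
  have ibp : ∫ x in a..b, F x * ψ' x
      = F b * ψ b - F a * ψ a - ∫ x in a..b, e x * ψ x := by
    apply integral_mul_deriv_eq_deriv_mul_of_hasDeriv_right
    · rw [uIcc_of_le hab']; exact hFc
    · rw [uIcc_of_le hab']; exact hψc
    · rw [min_eq_left hab', max_eq_right hab']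
      intro x hx; exact (hF' x hx).hasDerivWithinAt
    · rw [min_eq_left hab', max_eq_right hab']
      intro x hx; exact (hψ' x hx).hasDerivWithinAt
    · exact heint
    · exact hψ'int
  have hFa : F a = 0 := integral_same
  have main_eq : ∫ x in a..b, e x * ψ x = F b * ψ b - ∫ x in a..b, F x * ψ' x := by
    rw [ibp, hFa]; ring
  -- sup bound
  set Msup := ⨆ x ∈ s, ‖ψ x‖ with hMsupdef
  have hbdd : BddAbove (Set.range fun x => ⨆ _ : x ∈ s, ‖ψ x‖) := by
    obtain ⟨K, hK⟩ := (isCompact_Icc.image_of_continuousOn hψc.norm).bddAbove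
    refine ⟨max K 0, ?_⟩
    rintro y ⟨x, rfl⟩
    dsimp only
    by_cases hx : x ∈ s
    · rw [ciSup_pos hx]
      exact le_trans (hK (Set.mem_image_of_mem _ hx)) (le_max_left _ _)
    · simp [hx]
  have hψb_le : ∀ t ∈ s, ‖ψ t‖ ≤ Msup := by
    intro t ht
    rw [hMsupdef]
    have := le_ciSup hbdd t
    rwa [ciSup_pos ht] at this
  have hMsup0 : 0 ≤ Msup := le_trans (norm_nonneg _) (hψb_le b (right_mem_Icc.mpr hab'))
  -- final estimate
  have hint_nonneg : 0 ≤ ∫ x in a..b, ‖ψ' x‖ :=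
    intervalIntegral.integral_nonneg hab' (fun x _ => norm_nonneg _)
  have step2 : ‖∫ x in a..b, F x * ψ' x‖ ≤ M * ∫ x in a..b, ‖ψ' x‖ := by
    calc ‖∫ x in a..b, F x * ψ' x‖ ≤ ∫ x in a..b, ‖F x * ψ' x‖ :=
          norm_integral_le_integral_norm hab'
      _ ≤ ∫ x in a..b, M * ‖ψ' x‖ := by
          apply intervalIntegral.integral_mono_on hab'
          · exact (((hFc.mul hψ'c).norm).mono (by rw [uIcc_of_le hab'])).intervalIntegrable
          · exact ((continuousOn_const.mul hψ'c.norm).mono (by rw [uIcc_of_le hab'])).intervalIntegrable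
          · intro x hx
            rw [norm_mul]
            exact mul_le_mul_of_nonneg_right (hFb x hx) (norm_nonneg _)
      _ = M * ∫ x in a..b, ‖ψ' x‖ := intervalIntegral.integral_const_mul _ _
  calc ‖∫ x in a..b, e x * ψ x‖
      = ‖F b * ψ b - ∫ x in a..b, F x * ψ' x‖ := by rw [main_eq]
    _ ≤ ‖F b * ψ b‖ + ‖∫ x in a..b, F x * ψ' x‖ := norm_sub_le _ _
    _ ≤ M * Msup + M * ∫ x in a..b, ‖ψ' x‖ := by
        gcongr
        rw [norm_mul]
        exact mul_le_mul (hFb b (right_mem_Icc.mpr hab')) (hψb_le b (right_mem_Icc.mpr hab'))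
          (norm_nonneg _) hM0
    _ = 8 * δ ^ (-(1 / 2) : ℝ) * (Msup + ∫ x in a..b, ‖ψ' x‖) := by
        rw [hMdef]; ring_nf
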